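/- If a sequent Γ ⇒ Δ is provable in Grz∞+cut, then it is provable in Grz∞ (the non-well-founded calculus without cut). -/

import Mathlib

/-- Modal formulas of the Grzegorczyk logic: ⊥, atoms, →, □. -/
inductive Formula : Type
  | bot : Formula
  | atom : ℕ → Formula
  | imp : Formula → Formula → Formula
  | box : Formula → Formula
deriving DecidableEq

/-- A sequent Γ ⇒ Δ is a pair of finite multisets of formulas. -/
abbrev Sequent : Type := Multiset Formula × Multiset Formula

/-- Names of the inference rules of Grz∞ + cut (including the two kinds of initial sequents). -/
inductive Rule : Type
  | ax | axBot | impL | impR | refl | box | cut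
deriving DecidableEq

/-- □Π for a multiset Π. -/
def boxed (P : Multiset Formula) : Multiset Formula := P.map Formula.box

/-- `Inst r s p₁ p₂` : the rule `r` has a (correct) instance with conclusion `s`,
first premise `p₁` and second premise `p₂` (`none` = no such premise). -/
inductive Inst : Rule → Sequent → Option Sequent → Option Sequent → Prop
  | ax (Γ Δ : Multiset Formula) (p : ℕ) :
      Inst .ax (Formula.atom p ::ₘ Γ, Formula.atom p ::ₘ Δ) none none
  | axBot (Γ Δ : Multiset Formula) :
      Inst .axBot (Formula.bot ::ₘ Γ, Δ) none none
  | impL (Γ Δ : Multiset Formula) (A B : Formula) :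
      Inst .impL (Formula.imp A B ::ₘ Γ, Δ) (some (B ::ₘ Γ, Δ)) (some (Γ, A ::ₘ Δ))
  | impR (Γ Δ : Multiset Formula) (A B : Formula) :
      Inst .impR (Γ, Formula.imp A B ::ₘ Δ) (some (A ::ₘ Γ, B ::ₘ Δ)) none
  | refl (Γ Δ : Multiset Formula) (A : Formula) :
      Inst .refl (Formula.box A ::ₘ Γ, Δ) (some (A ::ₘ Formula.box A ::ₘ Γ, Δ)) none
  | box (Γ Δ : Multiset Formula) (A : Formula) (P : Multiset Formula) :
      Inst .box (Γ + boxed P, Formula.box A ::ₘ Δ) (some (Γ + boxed P, A ::ₘ Δ))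
        (some (boxed P, {A}))
  | cut (Γ Δ : Multiset Formula) (A : Formula) :
      Inst .cut (Γ, Δ) (some (Γ, A ::ₘ Δ)) (some (A ::ₘ Γ, Δ))

/-- A labelling of tree addresses (lists of booleans; `true` = second/right child)
by a rule name together with a sequent; `none` means the address is outside the tree. -/
abbrev Lab : Type := List Bool → Option (Rule × Sequent)

/-- The labelling of the subtree at child `i`. -/
def shift (i : Bool) (l : Lab) : Lab := fun a => l (i :: a)

/-- An ∞-proof in Grz∞ + cut: a possibly infinite tree of sequents built according to
the rules, in which every infinite branch passes through the right premise of the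
rule (□) infinitely many times. -/
structure InfProof : Type where
  lab : Lab
  root_some : (lab []).isSome
  nojunk : ∀ (a : List Bool) (i : Bool), lab a = none → lab (a ++ [i]) = none
  step : ∀ (a : List Bool) (r : Rule) (s : Sequent), lab a = some (r, s) →
      Inst r s ((lab (a ++ [false])).map Prod.snd) ((lab (a ++ [true])).map Prod.snd)
  branch : ∀ f : ℕ → Bool, (∀ n : ℕ, (lab ((List.range n).map f)).isSome) →
      ∀ N : ℕ, ∃ n : ℕ, N ≤ n ∧ f n = true ∧
        (lab ((List.range n).map f)).map Prod.fst = some Rule.box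

/-- The sequent at the root of an ∞-proof. -/
def rootSeq (π : InfProof) : Sequent := ((π.lab []).map Prod.snd).getD (0, 0)

/-- `Proves π S` : the ∞-proof `π` is an ∞-proof of the sequent `S`. -/
def Proves (π : InfProof) (S : Sequent) : Prop := ∃ r : Rule, π.lab [] = some (r, S)

/-- An ∞-proof contains no application of the cut rule (i.e. it is a proof of Grz∞). -/
def NoCut (π : InfProof) : Prop := ∀ (a : List Bool) (r : Rule) (s : Sequent),
  π.lab a = some (r, s) → r ≠ Rule.cut

/-- Membership of an address in the main fragment: no proper passage through a
right premise of (□) strictly below it. -/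
def InMain (l : Lab) (a : List Bool) : Prop :=
  (l a).isSome ∧ ∀ (b c : List Bool), a = b ++ true :: c →
    (l b).map Prod.fst = some Rule.box → c = []

/-- The local height |π| : the length of the longest branch in the main fragment. -/
noncomputable def height (l : Lab) : ℕ := sSup {n : ℕ | ∃ a : List Bool, InMain l a ∧ a.length = n}

/-- The relations ∼ₙ on ∞-proofs (presented on labellings), defined inductively:
π ∼₀ τ always; a single-node proof is ∼ₙ-related to itself; proofs ending in the same
instance of (→L), (cut), (→R), (refl) are ∼ₙ-related when their immediate subproofs are;
proofs ending in the same instance of (□) are ∼ₙ₊₁-related when the left-premise subproofs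
are ∼ₙ₊₁-related and the right-premise subproofs are ∼ₙ-related. -/
inductive Sim : ℕ → Lab → Lab → Prop
  | zero (l m : Lab) : Sim 0 l m
  | leaf (n : ℕ) (l : Lab) : height l = 0 → Sim n l l
  | bin (n : ℕ) (l m : Lab) (r : Rule) (s : Sequent) :
      (r = Rule.impL ∨ r = Rule.cut) →
      l [] = some (r, s) → m [] = some (r, s) →
      (l [false]).map Prod.snd = (m [false]).map Prod.snd →
      (l [true]).map Prod.snd = (m [true]).map Prod.snd →
      Sim n (shift false l) (shift false m) → Sim n (shift true l) (shift true m) →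
      Sim n l m
  | un (n : ℕ) (l m : Lab) (r : Rule) (s : Sequent) :
      (r = Rule.impR ∨ r = Rule.refl) →
      l [] = some (r, s) → m [] = some (r, s) →
      (l [false]).map Prod.snd = (m [false]).map Prod.snd →
      Sim n (shift false l) (shift false m) →
      Sim n l m
  | box (n : ℕ) (l m : Lab) (s : Sequent) :
      l [] = some (Rule.box, s) → m [] = some (Rule.box, s) →
      (l [false]).map Prod.snd = (m [false]).map Prod.snd →
      (l [true]).map Prod.snd = (m [true]).map Prod.snd →
      Sim (n + 1) (shift false l) (shift false m) → Sim n (shift true l) (shift true m) →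
      Sim (n + 1) l m

/-- The sets 𝒫ₙ of ∞-proofs (presented on labellings), defined inductively:
𝒫₀ is everything; single-node proofs are in every 𝒫ₙ; (→L), (→R), (refl) preserve
membership in 𝒫ₙ; a proof ending in (□) with left-premise subproof in 𝒫ₙ₊₁ and
right-premise subproof in 𝒫ₙ is in 𝒫ₙ₊₁. -/
inductive MemP : ℕ → Lab → Prop
  | zero (l : Lab) : MemP 0 l
  | leaf (n : ℕ) (l : Lab) : height l = 0 → MemP n l
  | bin (n : ℕ) (l : Lab) (s : Sequent) :
      l [] = some (Rule.impL, s) →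
      MemP n (shift false l) → MemP n (shift true l) → MemP n l
  | un (n : ℕ) (l : Lab) (r : Rule) (s : Sequent) :
      (r = Rule.impR ∨ r = Rule.refl) →
      l [] = some (r, s) → MemP n (shift false l) → MemP n l
  | box (n : ℕ) (l : Lab) (s : Sequent) :
      l [] = some (Rule.box, s) →
      MemP (n + 1) (shift false l) → MemP n (shift true l) → MemP (n + 1) l

/- The metric d(π,τ) = 2^(−sup{n : π ∼ₙ τ}), with 2^(−∞) = 0. -/
open Classical in
noncomputable def pdist (π τ : InfProof) : ℝ :=
  if ∀ n : ℕ, Sim n π.lab τ.lab then 0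
  else (2 : ℝ) ^ (-((sSup {n : ℕ | Sim n π.lab τ.lab} : ℕ) : ℤ))

/-- A mapping on ∞-proofs is nonexpansive if it preserves all relations ∼ₙ. -/
def Nonexpansive (f : InfProof → InfProof) : Prop :=
  ∀ (n : ℕ) (π τ : InfProof), Sim n π.lab τ.lab → Sim n (f π).lab (f τ).lab

/-- A mapping is adequate if it is nonexpansive, maps 𝒫₁ into 𝒫₁,
and does not increase local height. -/
def Adequate (f : InfProof → InfProof) : Prop :=
  Nonexpansive f ∧ (∀ π : InfProof, MemP 1 π.lab → MemP 1 (f π).lab) ∧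
    ∀ π : InfProof, height (f π).lab ≤ height π.lab

/-- The set 𝒫₁ of ∞-proofs whose main fragment is cut-free, as a subtype. -/
abbrev P1 : Type := {π : InfProof // MemP 1 π.lab}

/-- An A-reducing mapping: a nonexpansive map ℛ : 𝒫₁ × 𝒫₁ → 𝒫₁ such that
ℛ(π′,π″) proves Γ ⇒ Δ whenever π′ proves Γ ⇒ Δ, A and π″ proves A, Γ ⇒ Δ. -/
def Reducing (A : Formula) (R : P1 → P1 → P1) : Prop :=
  (∀ (n : ℕ) (p₁ p₂ q₁ q₂ : P1), Sim n p₁.1.lab q₁.1.lab → Sim n p₂.1.lab q₂.1.lab →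
      Sim n (R p₁ p₂).1.lab (R q₁ q₂).1.lab) ∧
  ∀ (p₁ p₂ : P1) (Γ Δ : Multiset Formula),
    Proves p₁.1 (Γ, A ::ₘ Δ) → Proves p₂.1 (A ::ₘ Γ, Δ) → Proves (R p₁ p₂).1 (Γ, Δ)

/-- A mapping is root-preserving if it maps ∞-proofs to ∞-proofs of the same sequent. -/
def RootPres (f : InfProof → InfProof) : Prop :=
  ∀ (π : InfProof) (S : Sequent), Proves π S → Proves (f π) S

/-- The uniform distance on mappings of ∞-proofs. -/
noncomputable def udist (U V : InfProof → InfProof) : ℝ :=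
  ⨆ π : InfProof, pdist (U π) (V π)

/- The immediate subproof of `π` at child `i` (junk value `π` if there is none). -/
open Classical in
noncomputable def subtree (π : InfProof) (i : Bool) : InfProof :=
  if h : ∃ τ : InfProof, τ.lab = shift i π.lab then h.choose else π

/-- `IsFOp E F` : `F` is the operator ℱ (relative to the one-step cut-elimination map
`E` = ℰ*) defined by: on proofs with cut-free main fragment it commutes with the last
rule, applying `U` at right premises of (□) and fixing single-node proofs; on other
proofs it first applies `E`. -/
def IsFOp (E : InfProof → InfProof) (F : (InfProof → InfProof) → InfProof → InfProof) : Prop :=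
  ∀ (U : InfProof → InfProof) (π : InfProof),
    (MemP 1 π.lab → height π.lab = 0 → F U π = π) ∧
    (∀ (r : Rule) (s : Sequent), MemP 1 π.lab → π.lab [] = some (r, s) →
        r ≠ Rule.box → r ≠ Rule.cut → height π.lab ≠ 0 →
        (F U π).lab [] = some (r, s) ∧
        shift false (F U π).lab = (F U (subtree π false)).lab ∧
        (r = Rule.impL → shift true (F U π).lab = (F U (subtree π true)).lab)) ∧
    (∀ s : Sequent, MemP 1 π.lab → π.lab [] = some (Rule.box, s) →
        (F U π).lab [] = some (Rule.box, s) ∧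
        shift false (F U π).lab = (F U (subtree π false)).lab ∧
        shift true (F U π).lab = (U (subtree π true)).lab) ∧
    (¬ MemP 1 π.lab → F U π = F U (E π))

/-- Membership in 𝒩ₙ : a root-preserving nonexpansive map whose image lies in 𝒫ₙ. -/
def InN (n : ℕ) (U : InfProof → InfProof) : Prop :=
  Nonexpansive U ∧ RootPres U ∧ ∀ π : InfProof, MemP n (U π).lab

/-- The finitary sequent calculus Grz_Seq (with cut allowed iff the flag is `true`). -/
inductive GrzSeq : Bool → Sequent → Prop
  | ax (c : Bool) (Γ Δ : Multiset Formula) (A : Formula) :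
      GrzSeq c (A ::ₘ Γ, A ::ₘ Δ)
  | bot (c : Bool) (Γ Δ : Multiset Formula) :
      GrzSeq c (Formula.bot ::ₘ Γ, Δ)
  | impL (c : Bool) (Γ Δ : Multiset Formula) (A B : Formula) :
      GrzSeq c (B ::ₘ Γ, Δ) → GrzSeq c (Γ, A ::ₘ Δ) →
      GrzSeq c (Formula.imp A B ::ₘ Γ, Δ)
  | impR (c : Bool) (Γ Δ : Multiset Formula) (A B : Formula) :
      GrzSeq c (A ::ₘ Γ, B ::ₘ Δ) → GrzSeq c (Γ, Formula.imp A B ::ₘ Δ)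
  | refl (c : Bool) (Γ Δ : Multiset Formula) (B : Formula) :
      GrzSeq c (B ::ₘ Formula.box B ::ₘ Γ, Δ) → GrzSeq c (Formula.box B ::ₘ Γ, Δ)
  | grz (c : Bool) (Γ Δ : Multiset Formula) (A : Formula) (P : Multiset Formula) :
      GrzSeq c (Formula.box (Formula.imp A (Formula.box A)) ::ₘ boxed P, {A}) →
      GrzSeq c (Γ + boxed P, Formula.box A ::ₘ Δ)
  | cut (Γ Δ : Multiset Formula) (A : Formula) :
      GrzSeq true (Γ, A ::ₘ Δ) → GrzSeq true (A ::ₘ Γ, Δ) → GrzSeq true (Γ, Δ)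

/-!
Cut elimination is proved semantically, through finite partial orders.

Soundness of Grz∞ + cut: a world refuting the conclusion of a rule refutes some premise at a
world above it, strictly above when that premise is the right premise of (□). Following
refuted premises from the root gives an infinite branch, along which the world climbs strictly
infinitely often; this is impossible in a finite partial order.

Completeness of Grz∞: proof search applies rules only to unresolved formulas, and (□) only when
its right premise is valid. Validity is preserved, and every premise other than the right
premise of (□) resolves one more of the finitely many obligations `(A, side)` with `A` a
subformula of the root, so every infinite branch passes through right premises of (□)
infinitely often. A valid sequent always admits a step: otherwise it is saturated, and it is
refuted at the root of the model obtained by gluing countermodels of its (□)-premises below a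
new root.
-/

section Semantics

variable {W : Type}

def Sat [LE W] (V : W → ℕ → Prop) : W → Formula → Prop
  | _, .bot => False
  | w, .atom p => V w p
  | w, .imp A B => Sat V w A → Sat V w B
  | w, .box A => ∀ v, w ≤ v → Sat V v A

def Refutes [LE W] (V : W → ℕ → Prop) (w : W) (s : Sequent) : Prop :=
  (∀ A ∈ s.1, Sat V w A) ∧ ∀ A ∈ s.2, ¬ Sat V w A

def Valid (s : Sequent) : Prop :=
  ∀ (W : Type) [PartialOrder W] [Finite W] (V : W → ℕ → Prop) (w : W), ¬ Refutes V w s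

theorem sat_comp_iff {W' : Type} [Preorder W] [Preorder W'] {f : W' → W} (hf : Monotone f)
    (hback : ∀ x y, f x ≤ y → ∃ x', x ≤ x' ∧ f x' = y) (V : W → ℕ → Prop) :
    ∀ (A : Formula) (x : W'), Sat (V ∘ f) x A ↔ Sat V (f x) A
  | .bot, _ => Iff.rfl
  | .atom _, _ => Iff.rfl
  | .imp A B, x => imp_congr (sat_comp_iff hf hback V A x) (sat_comp_iff hf hback V B x)
  | .box A, x => by
    refine ⟨fun h y hy => ?_, fun h x' hx' => (sat_comp_iff hf hback V A x').2 (h _ (hf hx'))⟩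
    obtain ⟨x', hx', rfl⟩ := hback x y hy
    exact (sat_comp_iff hf hback V A x').1 (h x' hx')

@[simp]
theorem refutes_cons_left [LE W] {V : W → ℕ → Prop} {w : W} {A : Formula}
    {Γ Δ : Multiset Formula} :
    Refutes V w (A ::ₘ Γ, Δ) ↔ Sat V w A ∧ Refutes V w (Γ, Δ) := by
  simp [Refutes, and_assoc]

@[simp]
theorem refutes_cons_right [LE W] {V : W → ℕ → Prop} {w : W} {A : Formula}
    {Γ Δ : Multiset Formula} :
    Refutes V w (Γ, A ::ₘ Δ) ↔ ¬ Sat V w A ∧ Refutes V w (Γ, Δ) := by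
  simp [Refutes, and_left_comm]

end Semantics

section Soundness

variable {W : Type} [PartialOrder W] {V : W → ℕ → Prop}

theorem Inst.exists_refuted_premise {r : Rule} {s : Sequent} {p₁ p₂ : Option Sequent}
    (h : Inst r s p₁ p₂) {w : W} (hw : Refutes V w s) :
    ∃ (i : Bool) (s' : Sequent) (w' : W), cond i p₂ p₁ = some s' ∧ Refutes V w' s' ∧
      w ≤ w' ∧ (r = .box → i = true → w < w') := by
  cases h with
  | ax Γ Δ p => simp only [refutes_cons_left, refutes_cons_right] at hw; exact (hw.1 hw.2.1).elim
  | axBot Γ Δ => simp [Sat] at hw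
  | impL Γ Δ A B =>
    simp only [refutes_cons_left, Sat] at hw
    by_cases hA : Sat V w A
    · exact ⟨false, _, w, rfl, by simp [hw.1 hA, hw.2], le_rfl, by simp⟩
    · exact ⟨true, _, w, rfl, by simp [hA, hw.2], le_rfl, by simp⟩
  | impR Γ Δ A B =>
    simp only [refutes_cons_right, Sat, Classical.not_imp] at hw
    exact ⟨false, _, w, rfl, by simp [hw.1.1, hw.1.2, hw.2], le_rfl, by simp⟩
  | refl Γ Δ A =>
    simp only [refutes_cons_left] at hw
    exact ⟨false, _, w, rfl, by simp [hw.1 w le_rfl, hw], le_rfl, by simp⟩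
  | box Γ Δ A P =>
    simp only [refutes_cons_right] at hw
    by_cases hA : Sat V w A
    · obtain ⟨v, hwv, hv⟩ : ∃ v, w ≤ v ∧ ¬ Sat V v A := by simpa [Sat] using hw.1
      refine ⟨true, _, v, rfl, ⟨?_, by simpa using hv⟩, hwv,
        fun _ _ => lt_of_le_of_ne hwv (by rintro rfl; exact hv hA)⟩
      simp only [boxed, Multiset.forall_mem_map_iff]
      exact fun B hB u hvu => hw.2.1 (.box B) (by simp [boxed, hB]) u (hwv.trans hvu)
    · exact ⟨false, _, w, rfl, by simp [hA, hw.2], le_rfl, by simp⟩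
  | cut Γ Δ A =>
    by_cases hA : Sat V w A
    · exact ⟨true, _, w, rfl, by simp [hA, hw], le_rfl, by simp⟩
    · exact ⟨false, _, w, rfl, by simp [hA, hw], le_rfl, by simp⟩

theorem InfProof.exists_refuted_child (π : InfProof) {a : List Bool} {r : Rule} {s : Sequent}
    (ha : π.lab a = some (r, s)) {w : W} (hw : Refutes V w s) :
    ∃ (i : Bool) (r' : Rule) (s' : Sequent) (w' : W), π.lab (a ++ [i]) = some (r', s') ∧
      Refutes V w' s' ∧ w ≤ w' ∧ (r = .box → i = true → w < w') := by
  obtain ⟨i, s', w', hi, hw', hle, hlt⟩ := (π.step a r s ha).exists_refuted_premise hw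
  have hi : (π.lab (a ++ [i])).map Prod.snd = some s' := by cases i <;> exact hi
  obtain ⟨⟨r', _⟩, hr', rfl⟩ := Option.map_eq_some_iff.1 hi
  exact ⟨i, r', _, w', hr', hw', hle, hlt⟩

theorem valid_of_proves {π : InfProof} {S : Sequent} (h : Proves π S) : Valid S := by
  intro W _ _ V w₀ hw₀
  let Refuted : List Bool × W → Prop := fun x => ∃ r s, π.lab x.1 = some (r, s) ∧ Refutes V x.2 s
  have hstep : ∀ x, Refuted x → ∃ (i : Bool) (w' : W), Refuted (x.1 ++ [i], w') ∧ x.2 ≤ w' ∧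
      ((π.lab x.1).map Prod.fst = some .box → i = true → x.2 < w') := by
    rintro ⟨a, w⟩ ⟨r, s, ha, hw⟩
    obtain ⟨i, r', s', w', hr', hw', hle, hlt⟩ := π.exists_refuted_child ha hw
    exact ⟨i, w', ⟨r', s', hr', hw'⟩, hle, by simpa [ha] using hlt⟩
  have : Nonempty W := ⟨w₀⟩
  choose! bit next hnext using hstep
  let path : ℕ → List Bool × W := fun n => (fun x => (x.1 ++ [bit x], next x))^[n] ([], w₀)
  have path_succ : ∀ n, path (n + 1) = ((path n).1 ++ [bit (path n)], next (path n)) :=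
    fun n => Function.iterate_succ_apply' _ n _
  have hpath : ∀ n, Refuted (path n) := by
    intro n
    induction n with
    | zero => exact h.imp fun r hr => ⟨S, hr, hw₀⟩
    | succ n ih => rw [path_succ]; exact (hnext _ ih).1
  have haddr : ∀ n, (List.range n).map (fun k => bit (path k)) = (path n).1 := by
    intro n
    induction n with
    | zero => rfl
    | succ n ih => simp [List.range_succ, ih, path_succ]
  have hmono : Monotone fun n => (path n).2 :=
    monotone_nat_of_le_succ fun n => by rw [path_succ]; exact (hnext _ (hpath n)).2.1
  obtain ⟨N, hN⟩ := WellFoundedGT.monotone_chain_condition ⟨_, hmono⟩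
  obtain ⟨n, hn, hbit, hbox⟩ := π.branch (fun k => bit (path k))
    (fun n => by obtain ⟨r, s, hs, -⟩ := hpath n; simp [haddr, hs]) N
  have hlt := (hnext _ (hpath n)).2.2 (by rwa [← haddr]) hbit
  have hn : (path N).2 = (path n).2 := hN n hn
  have hn' : (path N).2 = (path (n + 1)).2 := hN (n + 1) (by omega)
  rw [path_succ] at hn'
  exact hlt.ne (hn.symm.trans hn')

end Soundness

section Witnesses

/- `WitTrue Γ Δ A` (`WitFalse Γ Δ A`): the formulas of `Γ ⇒ Δ` force `A` to be true (false) at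
every world refuting `Γ ⇒ Δ` (`Refutes.wit`). Unlike membership, this survives the
decomposition of `A` by a rule. -/
mutual

def WitTrue (Γ Δ : Multiset Formula) : Formula → Prop
  | .bot => .bot ∈ Γ
  | .atom p => .atom p ∈ Γ
  | .imp A B => .imp A B ∈ Γ ∨ WitFalse Γ Δ A ∨ WitTrue Γ Δ B
  | .box A => .box A ∈ Γ

def WitFalse (Γ Δ : Multiset Formula) : Formula → Prop
  | .bot => True
  | .atom p => .atom p ∈ Δ
  | .imp A B => .imp A B ∈ Δ ∨ WitTrue Γ Δ A ∧ WitFalse Γ Δ B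
  | .box A => .box A ∈ Δ ∨ WitFalse Γ Δ A

end

variable {Γ Δ Γ' Δ' : Multiset Formula} {A C : Formula}

theorem witTrue_of_mem (h : A ∈ Γ) : WitTrue Γ Δ A := by
  cases A <;> simp only [WitTrue] <;> tauto

theorem witFalse_of_mem (h : A ∈ Δ) : WitFalse Γ Δ A := by
  cases A <;> simp only [WitFalse] <;> tauto

theorem witTrue_of_mem_erase (hC : C ∈ Γ) (hΓ : Γ.erase A ≤ Γ') (hA : WitTrue Γ' Δ' A) :
    WitTrue Γ' Δ' C := by
  by_cases hCA : C = A
  · exact hCA ▸ hA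
  · exact witTrue_of_mem (Multiset.mem_of_le hΓ ((Multiset.mem_erase_of_ne hCA).2 hC))

theorem witFalse_of_mem_erase (hC : C ∈ Δ) (hΔ : Δ.erase A ≤ Δ') (hA : WitFalse Γ' Δ' A) :
    WitFalse Γ' Δ' C := by
  by_cases hCA : C = A
  · exact hCA ▸ hA
  · exact witFalse_of_mem (Multiset.mem_of_le hΔ ((Multiset.mem_erase_of_ne hCA).2 hC))

def WitLE (s s' : Sequent) : Prop :=
  (∀ A ∈ s.1, WitTrue s'.1 s'.2 A) ∧ ∀ A ∈ s.2, WitFalse s'.1 s'.2 A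

theorem WitLE.wit (h : WitLE (Γ, Δ) (Γ', Δ')) :
    ∀ A, (WitTrue Γ Δ A → WitTrue Γ' Δ' A) ∧ (WitFalse Γ Δ A → WitFalse Γ' Δ' A)
  | .bot => ⟨h.1 _, fun _ => trivial⟩
  | .atom _ => ⟨h.1 _, h.2 _⟩
  | .imp A B => by
    have hA := h.wit A
    have hB := h.wit B
    constructor
    · rintro (h' | h' | h')
      exacts [h.1 _ h', Or.inr (Or.inl (hA.2 h')), Or.inr (Or.inr (hB.1 h'))]
    · rintro (h' | ⟨h₁, h₂⟩)
      exacts [h.2 _ h', Or.inr ⟨hA.1 h₁, hB.2 h₂⟩]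
  | .box A => by
    refine ⟨h.1 _, ?_⟩
    rintro (h' | h')
    exacts [h.2 _ h', Or.inr ((h.wit A).2 h')]

theorem Refutes.wit {W : Type} [Preorder W] {V : W → ℕ → Prop} {w : W} (hw : Refutes V w (Γ, Δ)) :
    ∀ A, (WitTrue Γ Δ A → Sat V w A) ∧ (WitFalse Γ Δ A → ¬ Sat V w A)
  | .bot => ⟨hw.1 _, fun _ => id⟩
  | .atom _ => ⟨hw.1 _, hw.2 _⟩
  | .imp A B => by
    have hA := hw.wit A
    have hB := hw.wit B
    simp only [WitTrue, WitFalse, Sat]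
    refine ⟨?_, ?_⟩
    · rintro (h | h | h)
      exacts [hw.1 _ h, fun hA' => absurd hA' (hA.2 h), fun _ => hB.1 h]
    · rintro (h | ⟨h₁, h₂⟩)
      exacts [hw.2 _ h, fun hAB => hB.2 h₂ (hAB (hA.1 h₁))]
  | .box A => by
    simp only [WitTrue, WitFalse]
    refine ⟨hw.1 _, ?_⟩
    rintro (h | h) hbox
    exacts [hw.2 _ h hbox, (hw.wit A).2 h (hbox w le_rfl)]

theorem Refutes.of_witLE {W : Type} [Preorder W] {V : W → ℕ → Prop} {w : W} {s s' : Sequent}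
    (h : WitLE s s') (hw : Refutes V w s') : Refutes V w s :=
  ⟨fun A hA => (hw.wit A).1 (h.1 A hA), fun A hA => (hw.wit A).2 (h.2 A hA)⟩

/- An occurrence of `A` on the left (`false`) or right (`true`) of `Γ ⇒ Δ` is resolved when its
immediate subformulas already witness it, so that no rule needs to decompose it. -/
def Resolved (Γ Δ : Multiset Formula) : Formula → Bool → Prop
  | .imp A B, false => WitFalse Γ Δ A ∨ WitTrue Γ Δ B
  | .imp A B, true => WitTrue Γ Δ A ∧ WitFalse Γ Δ B
  | .box A, false => WitTrue Γ Δ A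
  | .box A, true => WitFalse Γ Δ A
  | _, _ => True

theorem Resolved.mono (h : WitLE (Γ, Δ) (Γ', Δ')) {A : Formula} {b : Bool} :
    Resolved Γ Δ A b → Resolved Γ' Δ' A b := by
  cases A <;> cases b <;> simp only [Resolved]
  all_goals first
    | exact id
    | exact Or.imp (h.wit _).2 (h.wit _).1
    | exact And.imp (h.wit _).1 (h.wit _).2
    | exact (h.wit _).1
    | exact (h.wit _).2

theorem Valid.of_witLE {s s' : Sequent} (h : WitLE s s') (hs : Valid s) : Valid s' :=
  fun W _ _ V w hw => hs W V w (hw.of_witLE h)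

end Witnesses

def Formula.subformulas : Formula → Finset Formula
  | .imp A B => insert (.imp A B) (A.subformulas ∪ B.subformulas)
  | .box A => insert (.box A) A.subformulas
  | A => {A}

theorem Formula.mem_subformulas_self (A : Formula) : A ∈ A.subformulas := by
  cases A <;> simp [Formula.subformulas]

theorem Formula.subformulas_subset_of_mem {A B : Formula} (h : A ∈ B.subformulas) :
    A.subformulas ⊆ B.subformulas := by
  induction B with
  | imp B C ihB ihC =>
    simp only [Formula.subformulas, Finset.mem_insert, Finset.mem_union] at h
    rcases h with rfl | h | h
    · rfl
    · exact (ihB h).trans (by simp [Formula.subformulas, Finset.subset_iff]; tauto)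
    · exact (ihC h).trans (by simp [Formula.subformulas, Finset.subset_iff]; tauto)
  | box B ihB =>
    simp only [Formula.subformulas, Finset.mem_insert] at h
    rcases h with rfl | h
    · rfl
    · exact (ihB h).trans (Finset.subset_insert _ _)
  | _ => simp only [Formula.subformulas, Finset.mem_singleton] at h; rw [h]

def Sequent.subformulas (s : Sequent) : Finset Formula :=
  (s.1 + s.2).toFinset.biUnion Formula.subformulas

def Formula.unbox? : Formula → Option Formula
  | .box A => some A
  | _ => none

def boxPart (Γ : Multiset Formula) : Multiset Formula := boxed (Γ.filterMap Formula.unbox?)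

theorem boxPart_le (Γ : Multiset Formula) : boxPart Γ ≤ Γ := by
  induction Γ using Multiset.induction with
  | empty => simp [boxPart, boxed]
  | cons A Γ ih =>
    cases A with
    | box A =>
      rw [boxPart, Multiset.filterMap_cons_some Formula.unbox? _ _ rfl, boxed, Multiset.map_cons]
      exact Multiset.cons_le_cons _ ih
    | _ =>
      rw [boxPart, Multiset.filterMap_cons_none _ _ rfl]
      exact ih.trans (Multiset.le_cons_self _ _)

theorem box_mem_boxPart {Γ : Multiset Formula} {A : Formula} (h : .box A ∈ Γ) :
    .box A ∈ boxPart Γ := by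
  simp only [boxPart, boxed, Multiset.mem_map, Multiset.mem_filterMap]
  exact ⟨A, ⟨_, h, rfl⟩, rfl⟩

namespace Sequent

variable {s s' : Sequent} {A B : Formula}

theorem mem_subformulas_of_mem (hA : A ∈ s.1 + s.2) : A ∈ s.subformulas :=
  Finset.mem_biUnion.2 ⟨A, Multiset.mem_toFinset.2 hA, A.mem_subformulas_self⟩

theorem mem_subformulas_of_mem_subformulas (hA : A ∈ s.subformulas) (hB : B ∈ A.subformulas) :
    B ∈ s.subformulas := by
  obtain ⟨C, hC, hAC⟩ := Finset.mem_biUnion.1 hA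
  exact Finset.mem_biUnion.2 ⟨C, hC, Formula.subformulas_subset_of_mem hAC hB⟩

theorem mem_subformulas_of_imp (h : .imp A B ∈ s.subformulas) :
    A ∈ s.subformulas ∧ B ∈ s.subformulas :=
  ⟨mem_subformulas_of_mem_subformulas h (by simp [Formula.subformulas, A.mem_subformulas_self]),
    mem_subformulas_of_mem_subformulas h (by simp [Formula.subformulas, B.mem_subformulas_self])⟩

theorem mem_subformulas_of_box (h : .box A ∈ s.subformulas) : A ∈ s.subformulas :=
  mem_subformulas_of_mem_subformulas h (by simp [Formula.subformulas, A.mem_subformulas_self])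

theorem subformulas_subset (h : ∀ A ∈ s'.1 + s'.2, A ∈ s.subformulas) :
    s'.subformulas ⊆ s.subformulas := fun _ hB =>
  let ⟨A, hA, hBA⟩ := Finset.mem_biUnion.1 hB
  mem_subformulas_of_mem_subformulas (h A (Multiset.mem_toFinset.1 hA)) hBA

end Sequent

section Glue

variable {ι : Type} {W : ι → Type} [∀ i, PartialOrder (W i)] (w : ∀ i, W i)

/- A fresh root `⊥` below disjoint copies of the upsets of the points `w i`. -/
abbrev GlueFrame : Type := WithBot (Σ i, Set.Ici (w i))

def glueVal (v₀ : ℕ → Prop) (V : ∀ i, W i → ℕ → Prop) : GlueFrame w → ℕ → Prop :=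
  WithBot.recBotCoe v₀ fun x => V x.1 x.2

variable {w} (v₀ : ℕ → Prop) (V : ∀ i, W i → ℕ → Prop)

theorem sat_glueVal_coe (i : ι) (x : Set.Ici (w i)) (A : Formula) :
    Sat (glueVal w v₀ V) (((⟨i, x⟩ : Σ i, Set.Ici (w i)) : GlueFrame w)) A ↔ Sat (V i) x.1 A := by
  have hf : Monotone fun x : Set.Ici (w i) => (((⟨i, x⟩ : Σ i, Set.Ici (w i)) : GlueFrame w)) :=
    fun x y hxy => WithBot.coe_le_coe.2 (Sigma.mk_le_mk_iff.2 hxy)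
  refine (sat_comp_iff hf (fun x y hxy => ?_) (glueVal w v₀ V) A x).symm.trans
    (sat_comp_iff (f := Subtype.val) (fun _ _ => id)
      (fun x y hxy => ⟨⟨y, x.2.trans hxy⟩, hxy, rfl⟩) (V i) A x)
  obtain ⟨⟨j, z⟩, rfl, hxz⟩ := WithBot.coe_le_iff.1 hxy
  obtain ⟨_, _, z, hxz⟩ := hxz
  exact ⟨z, hxz, rfl⟩

theorem sat_glueVal_bot_box (A : Formula) :
    Sat (glueVal w v₀ V) ⊥ (.box A) ↔
      Sat (glueVal w v₀ V) ⊥ A ∧ ∀ i, Sat (V i) (w i) (.box A) := by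
  refine ⟨fun h => ⟨h ⊥ le_rfl, fun i x hx => ?_⟩, fun ⟨hbot, h⟩ y _ => ?_⟩
  · exact (sat_glueVal_coe v₀ V i ⟨x, hx⟩ A).1 (h _ bot_le)
  · induction y using WithBot.recBotCoe with
    | bot => exact hbot
    | coe x => exact (sat_glueVal_coe v₀ V x.1 x.2 A).2 (h x.1 x.2 x.2.2)

end Glue

theorem sat_glueVal_bot_of_saturated {Γ Δ : Multiset Formula} {ι : Type} {W : ι → Type}
    [∀ i, PartialOrder (W i)] {w : ∀ i, W i} {V : ∀ i, W i → ℕ → Prop}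
    (hbot : .bot ∉ Γ) (hatom : ∀ p, .atom p ∈ Γ → .atom p ∉ Δ)
    (hΓ : ∀ A ∈ Γ, Resolved Γ Δ A false) (hboxΓ : ∀ A, .box A ∈ Γ → ∀ i, Sat (V i) (w i) (.box A))
    (hΔ : ∀ A ∈ Δ, Resolved Γ Δ A true ∨ ∃ B i, A = .box B ∧ ¬ Sat (V i) (w i) B) :
    ∀ A, (WitTrue Γ Δ A → Sat (glueVal w (fun p => .atom p ∈ Γ) V) ⊥ A) ∧
      (WitFalse Γ Δ A → ¬ Sat (glueVal w (fun p => .atom p ∈ Γ) V) ⊥ A)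
  | .bot => ⟨fun h => absurd h hbot, fun _ => id⟩
  | .atom p => ⟨id, fun hΔp hΓp => hatom p hΓp hΔp⟩
  | .imp A B => by
    have ihA := sat_glueVal_bot_of_saturated hbot hatom hΓ hboxΓ hΔ A
    have ihB := sat_glueVal_bot_of_saturated hbot hatom hΓ hboxΓ hΔ B
    have hT : WitFalse Γ Δ A ∨ WitTrue Γ Δ B → Sat (glueVal w _ V) ⊥ (.imp A B) :=
      fun h hA => h.elim (fun h => absurd hA (ihA.2 h)) ihB.1
    have hF : WitTrue Γ Δ A ∧ WitFalse Γ Δ B → ¬ Sat (glueVal w _ V) ⊥ (.imp A B) :=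
      fun h hAB => ihB.2 h.2 (hAB (ihA.1 h.1))
    refine ⟨?_, ?_⟩
    · rintro (h | h)
      exacts [hT (hΓ _ h), hT h]
    · rintro (h | h)
      · rcases hΔ _ h with h | ⟨_, _, ⟨⟩, _⟩
        exact hF h
      · exact hF h
  | .box A => by
    have ihA := sat_glueVal_bot_of_saturated hbot hatom hΓ hboxΓ hΔ A
    refine ⟨fun h => (sat_glueVal_bot_box _ V A).2 ⟨ihA.1 (hΓ _ h), hboxΓ A h⟩, ?_⟩
    have hF : WitFalse Γ Δ A → ¬ Sat (glueVal w _ V) ⊥ (.box A) :=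
      fun h hs => ihA.2 h (hs ⊥ le_rfl)
    rintro (h | h)
    · rcases hΔ _ h with h | ⟨_, i, ⟨⟩, hi⟩
      · exact hF h
      · exact fun hs => hi (((sat_glueVal_bot_box _ V A).1 hs).2 i (w i) le_rfl)
    · exact hF h

theorem not_valid_of_saturated {Γ Δ : Multiset Formula} (hbot : .bot ∉ Γ)
    (hatom : ∀ p, .atom p ∈ Γ → .atom p ∉ Δ) (hΓ : ∀ A ∈ Γ, Resolved Γ Δ A false)
    (hΔ : ∀ A ∈ Δ, Resolved Γ Δ A true ∨ ∃ B, A = .box B ∧ ¬ Valid (boxPart Γ, {B})) :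
    ¬ Valid (Γ, Δ) := by
  let ι := {B : Formula // .box B ∈ Δ ∧ ¬ Valid (boxPart Γ, {B})}
  have : Finite ι := Finite.of_injective (β := Δ.toFinset)
    (fun i => ⟨.box i.1, Multiset.mem_toFinset.2 i.2.1⟩)
    fun i j hij => Subtype.ext (Formula.box.inj (congrArg Subtype.val hij))
  have hcm : ∀ i : ι, ∃ (W : Type) (_ : PartialOrder W) (_ : Finite W) (V : W → ℕ → Prop) (w : W),
      Refutes V w (boxPart Γ, {i.1}) := fun i => by simpa [Valid] using i.2.2
  choose W hW hfin V w hw using hcm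
  have : Finite (GlueFrame w) := inferInstanceAs (Finite (Option _))
  intro hvalid
  refine hvalid (GlueFrame w) (glueVal w (fun p => .atom p ∈ Γ) V) ⊥ ?_
  have truth := sat_glueVal_bot_of_saturated hbot hatom hΓ
    (fun A hA i => (hw i).1 _ (box_mem_boxPart hA))
    fun A hA => (hΔ A hA).imp id fun ⟨B, hAB, hB⟩ =>
      ⟨B, ⟨B, hAB ▸ hA, hB⟩, hAB, (hw ⟨B, hAB ▸ hA, hB⟩).2 B (Multiset.mem_singleton_self B)⟩
  exact ⟨fun A hA => (truth A).1 (witTrue_of_mem hA), fun A hA => (truth A).2 (witFalse_of_mem hA)⟩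

abbrev Expansion : Type := Rule × Option Sequent × Option Sequent

def Expansion.premise (e : Expansion) (i : Bool) : Option Sequent := cond i e.2.2 e.2.1

theorem exists_ge_of_forall_lt_succ_or {μ : ℕ → ℕ} {P : ℕ → Prop} (h : ∀ n, μ (n + 1) < μ n ∨ P n)
    (N : ℕ) : ∃ n, N ≤ n ∧ P n := by
  refine not_not.1 fun hP => ?_
  have hdesc : ∀ k, μ (N + k) + k ≤ μ N := by
    intro k
    induction k with
    | zero => simp
    | succ k ih =>
      have := (h (N + k)).resolve_right fun hk => hP ⟨N + k, by omega, hk⟩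
      rw [← add_assoc N k 1]
      omega
  have := hdesc (μ N + 1)
  omega

section Unfold

variable (next : Sequent → Option Expansion) (S₀ : Sequent)

def nodeSeq (a : List Bool) : Option Sequent :=
  a.foldl (fun o i => o.bind fun s => (next s).bind (·.premise i)) (some S₀)

def unfoldLab : Lab := fun a => (nodeSeq next S₀ a).bind fun s => (next s).map fun e => (e.1, s)

def IsSearch (Inv : Sequent → Prop) (μ : Sequent → ℕ) : Prop :=
  ∀ s, Inv s → ∃ e, next s = some e ∧ Inst e.1 s (e.premise false) (e.premise true) ∧
    ∀ i s', e.premise i = some s' → Inv s' ∧ (μ s' < μ s ∨ e.1 = .box ∧ i = true)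

variable {next S₀} {Inv : Sequent → Prop} {μ : Sequent → ℕ}

theorem nodeSeq_append_singleton (a : List Bool) (i : Bool) :
    nodeSeq next S₀ (a ++ [i]) = (nodeSeq next S₀ a).bind fun s => (next s).bind (·.premise i) := by
  simp [nodeSeq, List.foldl_append]

theorem nodeSeq_of_unfoldLab_eq_some {a : List Bool} {r : Rule} {s : Sequent}
    (h : unfoldLab next S₀ a = some (r, s)) :
    nodeSeq next S₀ a = some s ∧ ∃ e, next s = some e ∧ e.1 = r := by
  simp only [unfoldLab, Option.bind_eq_some_iff, Option.map_eq_some_iff, Prod.mk.injEq] at h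
  obtain ⟨s, hs, e, he, rfl, rfl⟩ := h
  exact ⟨hs, e, he, rfl⟩

theorem IsSearch.inv_of_nodeSeq (h : IsSearch next Inv μ) (h₀ : Inv S₀) {a : List Bool}
    {s : Sequent} (hs : nodeSeq next S₀ a = some s) : Inv s := by
  induction a using List.reverseRecOn generalizing s with
  | nil => cases hs; exact h₀
  | append_singleton a i ih =>
    simp only [nodeSeq_append_singleton, Option.bind_eq_some_iff] at hs
    obtain ⟨t, ht, e, he, hi⟩ := hs
    obtain ⟨e', he', -, hprem⟩ := h t (ih ht)
    cases he.symm.trans he'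
    exact (hprem i s hi).1

theorem IsSearch.map_snd_unfoldLab (h : IsSearch next Inv μ) (h₀ : Inv S₀) (a : List Bool) :
    (unfoldLab next S₀ a).map Prod.snd = nodeSeq next S₀ a := by
  cases hs : nodeSeq next S₀ a with
  | none => simp [unfoldLab, hs]
  | some s =>
    obtain ⟨e, he, -⟩ := h s (h.inv_of_nodeSeq h₀ hs)
    simp [unfoldLab, hs, he]

def InfProof.unfold (h : IsSearch next Inv μ) (h₀ : Inv S₀) : InfProof where
  lab := unfoldLab next S₀
  root_some := by
    obtain ⟨e, he, -⟩ := h S₀ h₀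
    simp [unfoldLab, nodeSeq, he]
  nojunk a i ha := by
    cases hs : nodeSeq next S₀ a with
    | none => simp [unfoldLab, nodeSeq_append_singleton, hs]
    | some s =>
      simp only [unfoldLab, hs, Option.bind_some, Option.map_eq_none_iff] at ha
      simp [unfoldLab, nodeSeq_append_singleton, hs, ha]
  step a r s ha := by
    obtain ⟨hs, e, he, rfl⟩ := nodeSeq_of_unfoldLab_eq_some ha
    obtain ⟨e', he', hinst, -⟩ := h s (h.inv_of_nodeSeq h₀ hs)
    cases he.symm.trans he'
    simpa only [h.map_snd_unfoldLab h₀, nodeSeq_append_singleton, hs, he, Option.bind_some]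
      using hinst
  branch f hall N := by
    have hnode : ∀ n, ∃ s e, nodeSeq next S₀ ((List.range n).map f) = some s ∧ next s = some e := by
      intro n
      obtain ⟨⟨r, s⟩, hx⟩ := Option.isSome_iff_exists.1 (hall n)
      obtain ⟨hs, e, he, -⟩ := nodeSeq_of_unfoldLab_eq_some hx
      exact ⟨s, e, hs, he⟩
    choose s e hs he using hnode
    have hdesc : ∀ n, μ (s (n + 1)) < μ (s n) ∨ (e n).1 = .box ∧ f n = true := by
      intro n
      have hsucc := hs (n + 1)
      rw [List.range_succ, List.map_append, List.map_singleton, nodeSeq_append_singleton, hs n,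
        Option.bind_some, he n, Option.bind_some] at hsucc
      obtain ⟨e', he', -, hprem⟩ := h _ (h.inv_of_nodeSeq h₀ (hs n))
      cases (he n).symm.trans he'
      exact (hprem _ _ hsucc).2
    obtain ⟨n, hn, hbox, hfn⟩ := exists_ge_of_forall_lt_succ_or (μ := fun n => μ (s n)) hdesc N
    exact ⟨n, hn, hfn, by simp [unfoldLab, hs n, he n, hbox]⟩

theorem IsSearch.proves_unfold (h : IsSearch next Inv μ) (h₀ : Inv S₀) :
    Proves (InfProof.unfold h h₀) S₀ := by
  obtain ⟨e, he, -⟩ := h S₀ h₀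
  exact ⟨e.1, by simp [InfProof.unfold, unfoldLab, nodeSeq, he]⟩

theorem IsSearch.noCut_unfold (h : IsSearch next Inv μ) (h₀ : Inv S₀)
    (hcut : ∀ s e, next s = some e → e.1 ≠ .cut) : NoCut (InfProof.unfold h h₀) := by
  intro a r s ha
  obtain ⟨-, e, he, rfl⟩ := nodeSeq_of_unfoldLab_eq_some ha
  exact hcut s e he

end Unfold

/- (□) is applied only when its right premise is valid, so validity passes to every premise. -/
inductive SearchStep : Sequent → Expansion → Prop
  | axBot {Γ Δ : Multiset Formula} : .bot ∈ Γ → SearchStep (Γ, Δ) (.axBot, none, none)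
  | ax {Γ Δ : Multiset Formula} {p : ℕ} : .atom p ∈ Γ → .atom p ∈ Δ →
      SearchStep (Γ, Δ) (.ax, none, none)
  | impL {Γ Δ : Multiset Formula} {A B : Formula} : .imp A B ∈ Γ →
      ¬ Resolved Γ Δ (.imp A B) false →
      SearchStep (Γ, Δ)
        (.impL, some (B ::ₘ Γ.erase (.imp A B), Δ), some (Γ.erase (.imp A B), A ::ₘ Δ))
  | impR {Γ Δ : Multiset Formula} {A B : Formula} : .imp A B ∈ Δ →
      ¬ Resolved Γ Δ (.imp A B) true →
      SearchStep (Γ, Δ) (.impR, some (A ::ₘ Γ, B ::ₘ Δ.erase (.imp A B)), none)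
  | refl {Γ Δ : Multiset Formula} {A : Formula} : .box A ∈ Γ → ¬ Resolved Γ Δ (.box A) false →
      SearchStep (Γ, Δ) (.refl, some (A ::ₘ Γ, Δ), none)
  | box {Γ Δ : Multiset Formula} {A : Formula} : .box A ∈ Δ → ¬ Resolved Γ Δ (.box A) true →
      Valid (boxPart Γ, {A}) →
      SearchStep (Γ, Δ) (.box, some (Γ, A ::ₘ Δ.erase (.box A)), some (boxPart Γ, {A}))

namespace SearchStep

variable {s s' : Sequent} {e : Expansion} {i : Bool}

theorem ne_cut (h : SearchStep s e) : e.1 ≠ .cut := by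
  cases h <;> nofun

theorem inst (h : SearchStep s e) : Inst e.1 s e.2.1 e.2.2 := by
  cases h with
  | @axBot Γ Δ h => simpa [Multiset.cons_erase h] using Inst.axBot (Γ.erase .bot) Δ
  | @ax Γ Δ p hΓ hΔ =>
    simpa [Multiset.cons_erase hΓ, Multiset.cons_erase hΔ] using
      Inst.ax (Γ.erase (.atom p)) (Δ.erase (.atom p)) p
  | @impL Γ Δ A B h _ => simpa [Multiset.cons_erase h] using Inst.impL (Γ.erase (.imp A B)) Δ A B
  | @impR Γ Δ A B h _ => simpa [Multiset.cons_erase h] using Inst.impR Γ (Δ.erase (.imp A B)) A B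
  | @refl Γ Δ A h _ => simpa [Multiset.cons_erase h] using Inst.refl (Γ.erase (.box A)) Δ A
  | @box Γ Δ A h _ _ =>
    have := Inst.box (Γ - boxPart Γ) (Δ.erase (.box A)) A (Γ.filterMap Formula.unbox?)
    rwa [← boxPart, tsub_add_cancel_of_le (boxPart_le Γ), Multiset.cons_erase h] at this

theorem subformulas_premise_subset (h : SearchStep s e) (hi : e.premise i = some s') :
    s'.subformulas ⊆ s.subformulas := by
  refine Sequent.subformulas_subset fun C hC => ?_
  have hΓ : ∀ {C}, C ∈ s.1 → C ∈ s.subformulas := fun h' =>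
    Sequent.mem_subformulas_of_mem (Multiset.mem_add.2 (Or.inl h'))
  have hΔ : ∀ {C}, C ∈ s.2 → C ∈ s.subformulas := fun h' =>
    Sequent.mem_subformulas_of_mem (Multiset.mem_add.2 (Or.inr h'))
  cases h with
  | axBot _ | ax _ _ => cases i <;> cases hi
  | impL hAB _ =>
    obtain ⟨hA, hB⟩ := Sequent.mem_subformulas_of_imp (hΓ hAB)
    cases i <;> cases hi <;> simp only [Multiset.mem_add, Multiset.mem_cons] at hC
    · rcases hC with (rfl | hC) | hC
      exacts [hB, hΓ (Multiset.mem_of_mem_erase hC), hΔ hC]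
    · rcases hC with hC | rfl | hC
      exacts [hΓ (Multiset.mem_of_mem_erase hC), hA, hΔ hC]
  | impR hAB _ =>
    obtain ⟨hA, hB⟩ := Sequent.mem_subformulas_of_imp (hΔ hAB)
    cases i <;> cases hi
    simp only [Multiset.mem_add, Multiset.mem_cons] at hC
    rcases hC with (rfl | hC) | rfl | hC
    exacts [hA, hΓ hC, hB, hΔ (Multiset.mem_of_mem_erase hC)]
  | refl hA _ =>
    cases i <;> cases hi
    simp only [Multiset.mem_add, Multiset.mem_cons] at hC
    rcases hC with (rfl | hC) | hC
    exacts [Sequent.mem_subformulas_of_box (hΓ hA), hΓ hC, hΔ hC]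
  | box hA _ _ =>
    cases i <;> cases hi <;> simp only [Multiset.mem_add, Multiset.mem_cons,
      Multiset.mem_singleton] at hC
    · rcases hC with hC | rfl | hC
      exacts [hΓ hC, Sequent.mem_subformulas_of_box (hΔ hA), hΔ (Multiset.mem_of_mem_erase hC)]
    · rcases hC with hC | rfl
      exacts [hΓ (Multiset.mem_of_le (boxPart_le _) hC), Sequent.mem_subformulas_of_box (hΔ hA)]

open Multiset in
theorem premise_progress (h : SearchStep s e) (hi : e.premise i = some s') :
    (WitLE s s' ∧ ∃ A b, A ∈ s.1 + s.2 ∧ ¬ Resolved s.1 s.2 A b ∧ Resolved s'.1 s'.2 A b) ∨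
      (e.1 = .box ∧ i = true ∧ Valid s') := by
  cases h with
  | axBot _ | ax _ _ => cases i <;> cases hi
  | impL hAB hres =>
    left
    cases i <;> cases hi
    · refine ⟨⟨fun C hC => witTrue_of_mem_erase hC (le_cons_self _ _) ?_,
        fun C hC => witFalse_of_mem hC⟩, _, false, mem_add.2 (Or.inl hAB), hres, ?_⟩
      exacts [Or.inr (Or.inr (witTrue_of_mem (mem_cons_self _ _))),
        Or.inr (witTrue_of_mem (mem_cons_self _ _))]
    · refine ⟨⟨fun C hC => witTrue_of_mem_erase hC le_rfl ?_,
        fun C hC => witFalse_of_mem (mem_cons_of_mem hC)⟩, _, false, mem_add.2 (Or.inl hAB),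
        hres, ?_⟩
      exacts [Or.inr (Or.inl (witFalse_of_mem (mem_cons_self _ _))),
        Or.inl (witFalse_of_mem (mem_cons_self _ _))]
  | @impR Γ Δ A B hAB hres =>
    left
    cases i <;> cases hi
    have hwit : WitTrue (A ::ₘ Γ) (B ::ₘ Δ.erase (.imp A B)) A ∧
        WitFalse (A ::ₘ Γ) (B ::ₘ Δ.erase (.imp A B)) B :=
      ⟨witTrue_of_mem (mem_cons_self _ _), witFalse_of_mem (mem_cons_self _ _)⟩
    exact ⟨⟨fun C hC => witTrue_of_mem (mem_cons_of_mem hC),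
      fun C hC => witFalse_of_mem_erase hC (le_cons_self _ _) (Or.inr hwit)⟩,
      _, true, mem_add.2 (Or.inr hAB), hres, hwit⟩
  | refl hA hres =>
    left
    cases i <;> cases hi
    exact ⟨⟨fun C hC => witTrue_of_mem (mem_cons_of_mem hC), fun C hC => witFalse_of_mem hC⟩,
      _, false, mem_add.2 (Or.inl hA), hres, witTrue_of_mem (mem_cons_self _ _)⟩
  | @box Γ Δ A hA hres hvalid =>
    cases i <;> cases hi
    · left
      have hwit : WitFalse Γ (A ::ₘ Δ.erase (.box A)) A := witFalse_of_mem (mem_cons_self _ _)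
      exact ⟨⟨fun C hC => witTrue_of_mem hC,
        fun C hC => witFalse_of_mem_erase hC (le_cons_self _ _) (Or.inr hwit)⟩,
        _, true, mem_add.2 (Or.inr hA), hres, hwit⟩
    · exact Or.inr ⟨rfl, rfl, hvalid⟩

end SearchStep

theorem exists_searchStep_of_valid {s : Sequent} (hs : Valid s) : ∃ e, SearchStep s e := by
  obtain ⟨Γ, Δ⟩ := s
  refine not_not.1 fun hnone => not_valid_of_saturated (fun h => hnone ⟨_, .axBot h⟩)
    (fun p hΓ hΔ => hnone ⟨_, .ax hΓ hΔ⟩) (fun A hA => ?_) (fun A hA => ?_) hs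
  · cases A with
    | imp A B => exact not_not.1 fun h => hnone ⟨_, .impL hA h⟩
    | box A => exact not_not.1 fun h => hnone ⟨_, .refl hA h⟩
    | _ => trivial
  · cases A with
    | imp A B => exact .inl (not_not.1 fun h => hnone ⟨_, .impR hA h⟩)
    | box A =>
      by_cases hres : Resolved Γ Δ (.box A) true
      · exact .inl hres
      · exact .inr ⟨A, rfl, fun hv => hnone ⟨_, .box hA hres hv⟩⟩
    | _ => exact .inl trivial

open Classical in
noncomputable def unresolved (S₀ s : Sequent) : ℕ :=
  ((S₀.subformulas ×ˢ (Finset.univ : Finset Bool)).filter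
    fun x => ¬ Resolved s.1 s.2 x.1 x.2).card

open Classical in
theorem unresolved_lt {S₀ s s' : Sequent} (h : WitLE s s') {A : Formula} {b : Bool}
    (hA : A ∈ S₀.subformulas) (hs : ¬ Resolved s.1 s.2 A b) (hs' : Resolved s'.1 s'.2 A b) :
    unresolved S₀ s' < unresolved S₀ s := by
  refine Finset.card_lt_card ⟨Finset.monotone_filter_right _
    fun x _ hx hres => hx (Resolved.mono h hres), fun hsub => ?_⟩
  have hmem : (A, b) ∈ (S₀.subformulas ×ˢ Finset.univ).filter
      fun x => ¬ Resolved s.1 s.2 x.1 x.2 := by simp [hA, hs]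
  exact (Finset.mem_filter.1 (hsub hmem)).2 hs'

open Classical in
noncomputable def searchNext (s : Sequent) : Option Expansion :=
  if h : ∃ e, SearchStep s e then some h.choose else none

theorem searchStep_of_searchNext_eq_some {s : Sequent} {e : Expansion}
    (h : searchNext s = some e) : SearchStep s e := by
  unfold searchNext at h
  split_ifs at h with hex
  exact Option.some.inj h ▸ hex.choose_spec

theorem isSearch_searchNext (S₀ : Sequent) :
    IsSearch searchNext (fun s => Valid s ∧ s.subformulas ⊆ S₀.subformulas) (unresolved S₀) := by
  rintro s ⟨hvalid, hsub⟩
  obtain ⟨e, he⟩ := Option.isSome_iff_exists.1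
    (by simp [searchNext, exists_searchStep_of_valid hvalid] : (searchNext s).isSome)
  have hstep := searchStep_of_searchNext_eq_some he
  refine ⟨e, he, hstep.inst, fun i s' hi => ?_⟩
  have hsub' := (hstep.subformulas_premise_subset hi).trans hsub
  rcases hstep.premise_progress hi with ⟨hle, A, b, hA, hs, hs'⟩ | ⟨hbox, rfl, hv⟩
  · exact ⟨⟨hvalid.of_witLE hle, hsub'⟩,
      .inl (unresolved_lt hle (hsub (Sequent.mem_subformulas_of_mem hA)) hs hs')⟩
  · exact ⟨⟨hv, hsub'⟩, .inr ⟨hbox, rfl⟩⟩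

theorem exists_noCut_proves_of_valid {S : Sequent} (hS : Valid S) :
    ∃ π : InfProof, NoCut π ∧ Proves π S :=
  ⟨_, (isSearch_searchNext S).noCut_unfold ⟨hS, subset_rfl⟩
      fun _ _ he => (searchStep_of_searchNext_eq_some he).ne_cut,
    (isSearch_searchNext S).proves_unfold ⟨hS, subset_rfl⟩⟩

/-- cut elimination: any sequent provable in Grz∞ + cut is provable in
Grz∞ (without cut). -/
theorem cut_elimination (S : Sequent) :
    (∃ π : InfProof, Proves π S) → ∃ π : InfProof, NoCut π ∧ Proves π S :=
  fun ⟨_, hπ⟩ => exists_noCut_proves_of_valid (valid_of_proves hπ)
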